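/- Let r ≥ 1, let s_1,…,s_r be positive integers, set d_i := s_i+⋯+s_r, and let Q_1,…,Q_{r−1} ∈ F[t] be polynomials with deg Q_k ≤ μ_k and with every coefficient of Q_k of absolute value ≤ q^{s_k·q/(q−1)}. Fix an integer n ≥ 0, indices 1 ≤ ℓ ≤ i ≤ r, 1 ≤ j ≤ d_i, and a weakly increasing chain of integers ℓ = k_0 ≤ k_1 ≤ ⋯ ≤ k_n = i. Then, in F[[t]], the Gauss norm satisfies ‖(t−θ^{q^n})^{d_i−j}·Π_{m=1}^{n} (Π_{k_{m−1}≤k<k_m} Q_k^{(m−1)})·((t−θ^{q^m})^{d_{k_m}})^{−1}‖_θ ≤ q^{α}, where α := Σ_{ℓ≤k<i} μ_k + d_ℓ·q/(q−1) − (j + d_i/(q−1))·q^n ∈ ℝ, (t−θ^{q^m})^{−1} denotes the inverse in F[[t]], and empty products equal 1. (This is the key Gauss-norm estimate in the proof of Proposition 4.2 of the paper.) -/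

import Mathlib

/-!
For an ultrametric absolute value the Gauss norm is submultiplicative, so it suffices to bound
each factor. Since `‖θ ^ q ^ m‖ = q ^ q ^ m ≥ q`, one has `‖t - θ ^ q ^ m‖_θ ≤ q ^ q ^ m` and, from
the geometric series, `‖(t - θ ^ q ^ m)⁻¹‖_θ ≤ q ^ (-q ^ m)`; twisting `Q_k` raises its coefficient
bound to the power `q ^ m`. The resulting exponents telescope along the chain, because
`d_a - d_b = ∑_{a ≤ k < b} s_k` and `q ^ (m + 1) + q ^ (m + 1) / (q - 1) = q ^ (m + 2) / (q - 1)`.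
-/

open PowerSeries Filter Topology
open scoped ENNReal

noncomputable section

variable {F : Type*} [NormedField F]

/-- Gauss norm `‖f‖_θ = sup_m |c_m|·q^m ∈ [0,∞]` on `F[[t]]`. -/
def gaussNorm (q : ℕ) (f : PowerSeries F) : ℝ≥0∞ :=
  ⨆ m : ℕ, (‖PowerSeries.coeff m f‖₊ : ℝ≥0∞) * (q : ℝ≥0∞) ^ m

/-- `n`-fold Frobenius (`q^n`-th power) twist of a polynomial, applied coefficientwise. -/
def ptwist (q n : ℕ) (P : Polynomial F) : Polynomial F :=
  ∑ j ∈ Finset.range (P.natDegree + 1), Polynomial.C (P.coeff j ^ q ^ n) * Polynomial.X ^ j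

/-- The product over `m = 1,…,n` of
`(Π_{k_{m−1} ≤ k < k_m} Q_k^{(m−1)}) · ((t−θ^{q^m})^{d_{k_m}})⁻¹`,
attached to a weakly increasing chain `kc : Fin (n+1) → ℕ`; the inverse is taken in
`F[[t]]` and empty products equal `1`. -/
def chainProd (q : ℕ) (θ : F) (d : ℕ → ℕ) (Q : ℕ → Polynomial F) {n : ℕ}
    (kc : Fin (n + 1) → ℕ) : PowerSeries F :=
  ∏ m : Fin n,
    (∏ k ∈ Finset.Ico (kc m.castSucc) (kc m.succ), (ptwist q (m : ℕ) (Q k) : PowerSeries F)) *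
      ((PowerSeries.X - PowerSeries.C (θ ^ q ^ ((m : ℕ) + 1))) ^ d (kc m.succ))⁻¹

theorem PowerSeries.inv_pow {k : Type*} [Field k] (φ : k⟦X⟧) (n : ℕ) : φ⁻¹ ^ n = (φ ^ n)⁻¹ := by
  induction n with
  | zero => simp
  | succ n ih => rw [pow_succ, pow_succ', PowerSeries.mul_inv_rev, ih]

lemma ofReal_rpow_mul_ofReal_rpow {b : ℝ} (hb : 0 < b) (x y : ℝ) :
    ENNReal.ofReal (b ^ x) * ENNReal.ofReal (b ^ y) = ENNReal.ofReal (b ^ (x + y)) := by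
  rw [Real.rpow_add hb, ENNReal.ofReal_mul (by positivity)]

lemma prod_ofReal_rpow {ι : Type*} {b : ℝ} (hb : 0 < b) (s : Finset ι) (x : ι → ℝ) :
    ∏ i ∈ s, ENNReal.ofReal (b ^ x i) = ENNReal.ofReal (b ^ ∑ i ∈ s, x i) := by
  rw [Real.rpow_sum_of_pos hb, ENNReal.ofReal_prod_of_nonneg fun i _ => by positivity]

lemma Fin.sum_univ_succ_sub_castSucc {M : Type*} [AddCommGroup M] {n : ℕ} (f : Fin (n + 1) → M) :
    ∑ i : Fin n, (f i.succ - f i.castSucc) = f (Fin.last n) - f 0 := by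
  induction n with
  | zero => simp
  | succ n ih =>
    rw [Fin.sum_univ_castSucc]
    simp only [Fin.succ_castSucc]
    rw [ih (fun i => f i.castSucc), Fin.castSucc_zero, Fin.succ_last]
    abel

lemma coeff_inv_X_sub_C {c : F} (hc : c ≠ 0) (m : ℕ) :
    coeff m ((X - C c : F⟦X⟧)⁻¹) = -c⁻¹ ^ (m + 1) := by
  have h : (X - C c : F⟦X⟧)⁻¹ = -invUnitsSub (Units.mk0 c hc) := by
    rw [PowerSeries.inv_eq_iff_mul_eq_one (by simp [hc]), neg_mul_comm, neg_sub]
    exact invUnitsSub_mul_sub _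
  simp [h, coeff_invUnitsSub]

lemma coeff_ptwist {q : ℕ} (hq : q ≠ 0) (n : ℕ) (P : Polynomial F) (m : ℕ) :
    (ptwist q n P).coeff m = P.coeff m ^ q ^ n := by
  simp only [ptwist, Polynomial.finsetSum_coeff, Polynomial.coeff_C_mul, Polynomial.coeff_X_pow,
    mul_ite, mul_one, mul_zero, Finset.sum_ite_eq, Finset.mem_range]
  split_ifs with hm
  · rfl
  · rw [Polynomial.coeff_eq_zero_of_natDegree_lt (by omega), zero_pow (pow_ne_zero n hq)]

section GaussNorm

variable (q : ℕ)

lemma gaussNorm_le_ofReal {f : F⟦X⟧} {B : ℝ} (h : ∀ m, ‖coeff m f‖ * (q : ℝ) ^ m ≤ B) :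
    gaussNorm q f ≤ ENNReal.ofReal B := by
  refine iSup_le fun m => ?_
  rw [← enorm_eq_nnnorm, ← ofReal_norm, ← ENNReal.ofReal_natCast,
    ← ENNReal.ofReal_pow q.cast_nonneg, ← ENNReal.ofReal_mul (norm_nonneg _)]
  exact ENNReal.ofReal_le_ofReal (h m)

lemma gaussNorm_one_le : gaussNorm q (1 : F⟦X⟧) ≤ 1 := by
  simpa using gaussNorm_le_ofReal (F := F) q (f := 1) (B := 1) fun m => by
    rcases m with _ | m <;> simp [coeff_one]

variable [IsUltrametricDist F]

lemma gaussNorm_mul_le (f g : F⟦X⟧) : gaussNorm q (f * g) ≤ gaussNorm q f * gaussNorm q g := by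
  refine iSup_le fun m => ?_
  rw [coeff_mul, ← enorm_eq_nnnorm]
  obtain ⟨p, hp, hle⟩ := IsUltrametricDist.exists_norm_finsetSum_le_of_nonempty
    (t := Finset.HasAntidiagonal.antidiagonal m) ⟨(0, m), by simp⟩
    fun p : ℕ × ℕ => coeff p.1 f * coeff p.2 g
  rw [Finset.HasAntidiagonal.mem_antidiagonal] at hp
  calc ‖∑ p ∈ Finset.HasAntidiagonal.antidiagonal m, coeff p.1 f * coeff p.2 g‖ₑ * (q : ℝ≥0∞) ^ m
      ≤ ‖coeff p.1 f‖ₑ * ‖coeff p.2 g‖ₑ * (q : ℝ≥0∞) ^ m := by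
        rw [← enorm_mul]
        gcongr
        exact enorm_le_iff_norm_le.mpr hle
    _ = (‖coeff p.1 f‖ₑ * (q : ℝ≥0∞) ^ p.1) * (‖coeff p.2 g‖ₑ * (q : ℝ≥0∞) ^ p.2) := by
        rw [← hp, pow_add]; ring
    _ ≤ gaussNorm q f * gaussNorm q g :=
        mul_le_mul' (le_iSup (fun k => ‖coeff k f‖ₑ * (q : ℝ≥0∞) ^ k) p.1)
          (le_iSup (fun k => ‖coeff k g‖ₑ * (q : ℝ≥0∞) ^ k) p.2)

lemma gaussNorm_prod_le {ι : Type*} (s : Finset ι) (f : ι → F⟦X⟧) :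
    gaussNorm q (∏ i ∈ s, f i) ≤ ∏ i ∈ s, gaussNorm q (f i) :=
  Finset.le_prod_of_submultiplicative _ (gaussNorm_one_le q) (gaussNorm_mul_le q) s f

lemma gaussNorm_pow_le (f : F⟦X⟧) (k : ℕ) : gaussNorm q (f ^ k) ≤ gaussNorm q f ^ k := by
  simpa using gaussNorm_prod_le q (Finset.range k) fun _ => f

end GaussNorm

section Bounds

variable {q : ℕ}

lemma gaussNorm_X_sub_C_le {c : F} (hc : (q : ℝ) ≤ ‖c‖) :
    gaussNorm q (X - C c : F⟦X⟧) ≤ ENNReal.ofReal ‖c‖ := by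
  refine gaussNorm_le_ofReal q fun m => ?_
  rcases m with _ | _ | m
  · simp
  · simpa [coeff_X] using hc
  · simp [coeff_X]

lemma gaussNorm_inv_X_sub_C_le {c : F} (hc0 : c ≠ 0) (hc : (q : ℝ) ≤ ‖c‖) :
    gaussNorm q ((X - C c : F⟦X⟧)⁻¹) ≤ ENNReal.ofReal ‖c‖⁻¹ := by
  refine gaussNorm_le_ofReal q fun m => ?_
  have hc' : ‖c‖ ≠ 0 := norm_ne_zero_iff.mpr hc0
  rw [coeff_inv_X_sub_C hc0, norm_neg, norm_pow, norm_inv]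
  calc ‖c‖⁻¹ ^ (m + 1) * (q : ℝ) ^ m ≤ ‖c‖⁻¹ ^ (m + 1) * ‖c‖ ^ m := by gcongr
    _ = ‖c‖⁻¹ := by rw [pow_succ', mul_assoc, ← mul_pow, inv_mul_cancel₀ hc', one_pow, mul_one]

lemma gaussNorm_ptwist_le (hq : 1 ≤ q) (n : ℕ) {P : Polynomial F} {μ : ℕ} {B : ℝ}
    (hdeg : P.natDegree ≤ μ) (hP : ∀ m, ‖P.coeff m‖ ≤ B) :
    gaussNorm q (ptwist q n P : F⟦X⟧) ≤ ENNReal.ofReal (B ^ q ^ n * (q : ℝ) ^ μ) := by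
  refine gaussNorm_le_ofReal q fun m => ?_
  rw [Polynomial.coeff_coe, coeff_ptwist (by omega), norm_pow]
  have hB : 0 ≤ B := (norm_nonneg _).trans (hP 0)
  by_cases hm : m ≤ μ
  · gcongr
    · exact hP m
    · exact_mod_cast hq
  · rw [Polynomial.coeff_eq_zero_of_natDegree_lt (by omega), norm_zero,
      zero_pow (pow_ne_zero n (by omega)), zero_mul]
    positivity

end Bounds

section Exponents

variable {q : ℕ} {θ : F}

lemma natCast_le_norm_pow (hq : 1 ≤ q) (hθ : ‖θ‖ = q) {N : ℕ} (hN : N ≠ 0) :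
    (q : ℝ) ≤ ‖θ ^ N‖ := by
  rw [norm_pow, hθ]
  exact le_self_pow₀ (by exact_mod_cast hq) hN

variable [IsUltrametricDist F]

lemma gaussNorm_X_sub_C_pow_le (hq : 1 ≤ q) (hθ : ‖θ‖ = q) {N : ℕ} (hN : N ≠ 0) (D : ℕ) :
    gaussNorm q ((X - C (θ ^ N) : F⟦X⟧) ^ D) ≤ ENNReal.ofReal ((q : ℝ) ^ ((N : ℝ) * D)) := by
  have hc := natCast_le_norm_pow hq hθ hN
  calc _ ≤ ENNReal.ofReal ‖θ ^ N‖ ^ D :=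
        (gaussNorm_pow_le q _ D).trans (pow_le_pow_left' (gaussNorm_X_sub_C_le hc) D)
    _ = _ := by
        rw [← ENNReal.ofReal_pow (norm_nonneg _), norm_pow, hθ, ← pow_mul, ← Nat.cast_mul,
          Real.rpow_natCast]

lemma gaussNorm_inv_X_sub_C_pow_le (hq : 1 ≤ q) (hθ : ‖θ‖ = q) {N : ℕ} (hN : N ≠ 0) (D : ℕ) :
    gaussNorm q (((X - C (θ ^ N) : F⟦X⟧) ^ D)⁻¹)
      ≤ ENNReal.ofReal ((q : ℝ) ^ (-((N : ℝ) * D))) := by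
  have hc := natCast_le_norm_pow hq hθ hN
  have hc0 : θ ^ N ≠ 0 := norm_pos_iff.mp ((Nat.cast_pos.mpr hq).trans_le hc)
  rw [← PowerSeries.inv_pow]
  calc _ ≤ ENNReal.ofReal ‖θ ^ N‖⁻¹ ^ D :=
        (gaussNorm_pow_le q _ D).trans (pow_le_pow_left' (gaussNorm_inv_X_sub_C_le hc0 hc) D)
    _ = _ := by
        rw [← ENNReal.ofReal_pow (by positivity), norm_pow, hθ, Real.rpow_neg q.cast_nonneg,
          ← Nat.cast_mul, Real.rpow_natCast, pow_mul, _root_.inv_pow]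

lemma gaussNorm_prod_ptwist_mul_inv_le (hq : 1 ≤ q) (hθ : ‖θ‖ = q)
    (m D : ℕ) (S : Finset ℕ) {Q : ℕ → Polynomial F} {μ : ℕ → ℕ} {x : ℕ → ℝ}
    (hdeg : ∀ k ∈ S, (Q k).natDegree ≤ μ k)
    (hQ : ∀ k ∈ S, ∀ i, ‖(Q k).coeff i‖ ≤ (q : ℝ) ^ x k) :
    gaussNorm q
        ((∏ k ∈ S, (ptwist q m (Q k) : F⟦X⟧)) * ((X - C (θ ^ q ^ (m + 1)) : F⟦X⟧) ^ D)⁻¹)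
      ≤ ENNReal.ofReal
          ((q : ℝ) ^ (∑ k ∈ S, (x k * (q : ℝ) ^ m + μ k) - (q : ℝ) ^ (m + 1) * D)) := by
  have hq0 : (0 : ℝ) < q := by exact_mod_cast hq
  have hptwist : ∀ k ∈ S, gaussNorm q (ptwist q m (Q k) : F⟦X⟧)
      ≤ ENNReal.ofReal ((q : ℝ) ^ (x k * (q : ℝ) ^ m + μ k)) := by
    intro k hk
    convert gaussNorm_ptwist_le hq m (hdeg k hk) (hQ k hk) using 2
    rw [Real.rpow_add hq0, Real.rpow_mul hq0.le, ← Nat.cast_pow, Real.rpow_natCast,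
      Real.rpow_natCast]
  calc _ ≤ _ := gaussNorm_mul_le q _ _
    _ ≤ (∏ k ∈ S, ENNReal.ofReal ((q : ℝ) ^ (x k * (q : ℝ) ^ m + μ k)))
          * ENNReal.ofReal ((q : ℝ) ^ (-(((q ^ (m + 1) : ℕ) : ℝ) * D))) :=
        mul_le_mul' ((gaussNorm_prod_le q S _).trans (Finset.prod_le_prod' hptwist))
          (gaussNorm_inv_X_sub_C_pow_le hq hθ (pow_ne_zero _ (by omega)) D)
    _ = _ := by
        rw [prod_ofReal_rpow hq0, ofReal_rpow_mul_ofReal_rpow hq0, Nat.cast_pow, ← sub_eq_add_neg]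

end Exponents

lemma sum_Ico_add_eq_of_eq_sum_Icc {s d : ℕ → ℕ} {r : ℕ}
    (hd : ∀ i, d i = ∑ k ∈ Finset.Icc i r, s k) {a b : ℕ} (hab : a ≤ b) (hb : b ≤ r + 1) :
    ∑ k ∈ Finset.Ico a b, s k + d b = d a := by
  rw [hd a, hd b, ← Finset.Ico_add_one_right_eq_Icc, ← Finset.Ico_add_one_right_eq_Icc,
    Finset.sum_Ico_consecutive _ hab hb]

def chainPotential (q : ℕ) (d μ : ℕ → ℕ) {n : ℕ} (kc : Fin (n + 1) → ℕ) (j : Fin (n + 1)) : ℝ :=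
  ∑ k ∈ Finset.range (kc j), (μ k : ℝ) - d (kc j) * (q : ℝ) ^ ((j : ℕ) + 1) / ((q : ℝ) - 1)

lemma chainPotential_succ_sub_castSucc {q : ℕ} (hq : 1 < q) {r : ℕ} {s d : ℕ → ℕ}
    (hd : ∀ i, d i = ∑ k ∈ Finset.Icc i r, s k) (μ : ℕ → ℕ) {n : ℕ} {kc : Fin (n + 1) → ℕ}
    (hmono : Monotone kc) (hr : kc (Fin.last n) ≤ r) (m : Fin n) :
    chainPotential q d μ kc m.succ - chainPotential q d μ kc m.castSucc
      = ∑ k ∈ Finset.Ico (kc m.castSucc) (kc m.succ),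
          ((s k : ℝ) * q / (q - 1) * (q : ℝ) ^ (m : ℕ) + μ k)
        - (q : ℝ) ^ ((m : ℕ) + 1) * d (kc m.succ) := by
  have hab : kc m.castSucc ≤ kc m.succ := hmono (Fin.castSucc_le_succ m)
  have hs : (d (kc m.castSucc) : ℝ) = ∑ k ∈ Finset.Ico (kc m.castSucc) (kc m.succ), (s k : ℝ)
      + d (kc m.succ) := by
    have hb : kc m.succ ≤ r + 1 := (hmono (Fin.le_last _)).trans (hr.trans (Nat.le_succ r))
    exact_mod_cast (sum_Ico_add_eq_of_eq_sum_Icc hd hab hb).symm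
  have hq1 : (q : ℝ) - 1 ≠ 0 := sub_ne_zero.mpr (by exact_mod_cast hq.ne')
  rw [Finset.sum_add_distrib, Finset.sum_Ico_eq_sub (fun k => (μ k : ℝ)) hab, ← Finset.sum_mul,
    ← Finset.sum_div, ← Finset.sum_mul]
  simp only [chainPotential, Fin.val_succ, Fin.val_castSucc, hs]
  field_simp
  ring

lemma gaussNorm_chainProd_le [IsUltrametricDist F] {q : ℕ} (hq : 1 < q) {θ : F} (hθ : ‖θ‖ = q)
    {r : ℕ} {s d : ℕ → ℕ} (hd : ∀ i, d i = ∑ k ∈ Finset.Icc i r, s k) {μ : ℕ → ℕ}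
    {Q : ℕ → Polynomial F} {n : ℕ} {kc : Fin (n + 1) → ℕ} (hmono : Monotone kc)
    (hr : kc (Fin.last n) ≤ r)
    (hQdeg : ∀ k ∈ Finset.Ico (kc 0) (kc (Fin.last n)), (Q k).natDegree ≤ μ k)
    (hQ : ∀ k ∈ Finset.Ico (kc 0) (kc (Fin.last n)), ∀ i,
      ‖(Q k).coeff i‖ ≤ (q : ℝ) ^ ((s k : ℝ) * q / (q - 1))) :
    gaussNorm q (chainProd q θ d Q kc)
      ≤ ENNReal.ofReal ((q : ℝ) ^
          (chainPotential q d μ kc (Fin.last n) - chainPotential q d μ kc 0)) := by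
  have hsub : ∀ m : Fin n, Finset.Ico (kc m.castSucc) (kc m.succ)
      ⊆ Finset.Ico (kc 0) (kc (Fin.last n)) := fun m =>
    Finset.Ico_subset_Ico (hmono (Fin.zero_le _)) (hmono (Fin.le_last _))
  rw [← Fin.sum_univ_succ_sub_castSucc, ← prod_ofReal_rpow (by positivity)]
  refine (gaussNorm_prod_le q _ _).trans (Finset.prod_le_prod' fun m _ => ?_)
  rw [chainPotential_succ_sub_castSucc hq hd μ hmono hr]
  exact gaussNorm_prod_ptwist_mul_inv_le hq.le hθ m _ _ (fun k hk => hQdeg k (hsub m hk))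
    (fun k hk => hQ k (hsub m hk))

theorem statement4_general
    {F : Type*} [NormedField F] [IsUltrametricDist F]
    (q : ℕ) (hq : IsPrimePow q) (θ : F) (hθ : ‖θ‖ = (q : ℝ))
    (r : ℕ) (s : ℕ → ℕ)
    (d : ℕ → ℕ) (hd : ∀ i, d i = ∑ k ∈ Finset.Icc i r, s k)
    (μ : ℕ → ℕ) (Q : ℕ → Polynomial F)
    (hQdeg : ∀ k, 1 ≤ k → k ≤ r - 1 → (Q k).natDegree ≤ μ k)
    (hQ : ∀ k, 1 ≤ k → k ≤ r - 1 → ∀ m,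
      ‖(Q k).coeff m‖ ≤ (q : ℝ) ^ ((s k : ℝ) * (q : ℝ) / ((q : ℝ) - 1)))
    (n l i j : ℕ) (hl : 1 ≤ l) (hli : l ≤ i) (hir : i ≤ r) (hj : j ≤ d i)
    (kc : Fin (n + 1) → ℕ) (hmono : Monotone kc) (h0 : kc 0 = l)
    (hlast : kc (Fin.last n) = i) :
    _root_.gaussNorm q
        ((PowerSeries.X - PowerSeries.C (θ ^ q ^ n)) ^ (d i - j) * chainProd q θ d Q kc)
      ≤ ENNReal.ofReal
          ((q : ℝ) ^ (((∑ k ∈ Finset.Ico l i, μ k : ℕ) : ℝ)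
            + (d l : ℝ) * (q : ℝ) / ((q : ℝ) - 1)
            - ((j : ℝ) + (d i : ℝ) / ((q : ℝ) - 1)) * ((q ^ n : ℕ) : ℝ))) := by
  have hq1 : 1 < q := hq.one_lt
  have hrange : ∀ k ∈ Finset.Ico (kc 0) (kc (Fin.last n)), 1 ≤ k ∧ k ≤ r - 1 := by
    intro k hk
    rw [Finset.mem_Ico, h0, hlast] at hk
    omega
  have hfirst := gaussNorm_X_sub_C_pow_le hq1.le hθ (pow_ne_zero n (by omega : q ≠ 0)) (d i - j)
  have hchain := gaussNorm_chainProd_le hq1 hθ hd hmono (hlast ▸ hir)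
    (fun k hk => hQdeg k (hrange k hk).1 (hrange k hk).2)
    (fun k hk => hQ k (hrange k hk).1 (hrange k hk).2)
  refine (gaussNorm_mul_le q _ _).trans ((mul_le_mul' hfirst hchain).trans_eq ?_)
  have hq1' : (q : ℝ) - 1 ≠ 0 := sub_ne_zero.mpr (by exact_mod_cast hq1.ne')
  rw [ofReal_rpow_mul_ofReal_rpow (by positivity)]
  congr 2
  simp only [chainPotential, h0, hlast, Fin.val_last, Fin.val_zero, Nat.cast_sum, Nat.cast_pow,
    Nat.cast_sub hj, Finset.sum_Ico_eq_sub _ hli]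
  field_simp
  ring

/-- key Gauss-norm estimate in the proof of Proposition 4.2 of the paper.
For a weakly increasing chain `ℓ = k_0 ≤ k_1 ≤ ⋯ ≤ k_n = i`, one has
`‖(t−θ^{q^n})^{d_i−j}·Π_{m=1}^{n}(Π_{k_{m−1}≤k<k_m} Q_k^{(m−1)})((t−θ^{q^m})^{d_{k_m}})⁻¹‖_θ
  ≤ q^{Σ_{ℓ≤k<i} μ_k + d_ℓ q/(q−1) − (j + d_i/(q−1)) q^n}`. -/
theorem statement4
    {F : Type*} [NormedField F] [IsUltrametricDist F]
    (q : ℕ) (hq : IsPrimePow q) (θ : F) (hθ : ‖θ‖ = (q : ℝ))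
    (r : ℕ) (hr : 1 ≤ r) (s : ℕ → ℕ) (hs : ∀ k, 1 ≤ k → k ≤ r → 0 < s k)
    (d : ℕ → ℕ) (hd : ∀ i, d i = ∑ k ∈ Finset.Icc i r, s k)
    (μ : ℕ → ℕ) (Q : ℕ → Polynomial F)
    (hQdeg : ∀ k, 1 ≤ k → k ≤ r - 1 → (Q k).natDegree ≤ μ k)
    (hQ : ∀ k, 1 ≤ k → k ≤ r - 1 → ∀ m,
      ‖(Q k).coeff m‖ ≤ (q : ℝ) ^ ((s k : ℝ) * (q : ℝ) / ((q : ℝ) - 1)))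
    (n l i j : ℕ) (hl : 1 ≤ l) (hli : l ≤ i) (hir : i ≤ r) (hj1 : 1 ≤ j) (hj : j ≤ d i)
    (kc : Fin (n + 1) → ℕ) (hmono : Monotone kc) (h0 : kc 0 = l)
    (hlast : kc (Fin.last n) = i) :
    _root_.gaussNorm q
        ((PowerSeries.X - PowerSeries.C (θ ^ q ^ n)) ^ (d i - j) * chainProd q θ d Q kc)
      ≤ ENNReal.ofReal
          ((q : ℝ) ^ (((∑ k ∈ Finset.Ico l i, μ k : ℕ) : ℝ)
            + (d l : ℝ) * (q : ℝ) / ((q : ℝ) - 1)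
            - ((j : ℝ) + (d i : ℝ) / ((q : ℝ) - 1)) * ((q ^ n : ℕ) : ℝ))) :=
  statement4_general q hq θ hθ r s d hd μ Q hQdeg hQ n l i j hl hli hir hj kc hmono h0 hlast
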